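/- Let n ≥ 1 and let M be a Hermitian matrix on ℂ^{F₂ⁿ} with operator norm ‖M‖ ≤ 1. With φ_A the phase state of the quadratic function f_A, one has E_A[(tr(M φ_A φ_A†))²] ≤ (tr M)²/4ⁿ + 2·2^{−n}; consequently, since E_A[tr(M φ_A φ_A†)] = tr(M)/2ⁿ, the variance satisfies E_A[(tr(M φ_A φ_A†))²] − (tr(M)/2ⁿ)² ≤ 2·2^{−n}. -/

import Mathlib

/-!
Write `φ_A = 2^{-n/2} s_A` with the real sign vector `s_A(x) = (-1)^{xᵀAx}`, so that
`Re tr(M φ_A φ_A†) = 2^{-n} Σ_{x,y} m_{xy} s_A(x) s_A(y)` with `m = Re M`. Since `xᵀAx` is the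
pairing of `A` with `xxᵀ`, averaging a product of signs over `A` is a character sum: it is `1`
if the corresponding sum of the matrices `xxᵀ` vanishes over `F₂` and `0` otherwise. Now
`xxᵀ + yyᵀ = 0` iff `x = y`, and `xxᵀ + yyᵀ + zzᵀ + wwᵀ = 0` iff the four points pair up
(the diagonal gives `w = x + y + z`, after which `(x + y)(x + z)ᵀ` must be symmetric, forcing
`x + y = 0`, `x + z = 0` or `y = z`). So the first moment is `tr M / 2ⁿ` and the second is
`4^{-n} ((Σ m_xx)² + Σ m_xy² + Σ m_xy m_yx − 2 Σ m_xx²) ≤ 4^{-n} ((tr M)² + 2 Σ m_xy²)`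
(using `2 m_xy m_yx ≤ m_xy² + m_yx²`), and `Σ m_xy² ≤ 2ⁿ` because every column of a
contraction has norm at most `1`.
-/

open Matrix

/-- The quadratic phase state `φ_A(x) = 2^{-n/2} (-1)^{xᵀAx}` as a vector in `ℂ^{F₂ⁿ}`. -/
noncomputable def phaseState (n : ℕ) (A : Matrix (Fin n) (Fin n) (ZMod 2)) :
    (Fin n → ZMod 2) → ℂ :=
  fun x => (Real.sqrt (2 ^ n) : ℂ)⁻¹ * (if x ⬝ᵥ A.mulVec x = 0 then 1 else -1)

/-- The rank-one projector `φ_A φ_A†`. -/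
noncomputable def phaseProj (n : ℕ) (A : Matrix (Fin n) (Fin n) (ZMod 2)) :
    Matrix (Fin n → ZMod 2) (Fin n → ZMod 2) ℂ :=
  Matrix.vecMulVec (phaseState n A) (star (phaseState n A))

open Finset

lemma ZMod.eq_zero_or_eq_one (a : ZMod 2) : a = 0 ∨ a = 1 := by
  decide +revert

noncomputable def signChar : AddChar (ZMod 2) ℝ where
  toFun b := if b = 0 then 1 else -1
  map_zero_eq_one' := if_pos rfl
  map_add_eq_mul' a b := by
    rcases ZMod.eq_zero_or_eq_one a with rfl | rfl <;>
      rcases ZMod.eq_zero_or_eq_one b with rfl | rfl <;> simp [CharTwo.add_self_eq_zero]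

lemma signChar_apply (b : ZMod 2) : signChar b = if b = 0 then 1 else -1 := rfl

lemma signChar_eq_one_iff {b : ZMod 2} : signChar b = 1 ↔ b = 0 := by
  rw [signChar_apply]
  split_ifs with h <;> norm_num [h]

lemma sum_signChar_apply {G : Type*} [AddGroup G] [Fintype G] (L : G →+ ZMod 2) :
    ∑ g, signChar (L g) = if L = 0 then (Fintype.card G : ℝ) else 0 := by
  classical
  have hL : signChar.compAddMonoidHom L = 0 ↔ L = 0 := by
    rw [AddChar.eq_zero_iff, DFunLike.ext_iff]
    simp only [AddChar.compAddMonoidHom_apply, signChar_eq_one_iff, AddMonoidHom.zero_apply]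
  simpa only [hL, AddChar.compAddMonoidHom_apply] using (signChar.compAddMonoidHom L).sum_eq_ite

section CharacterSum

variable {m n : Type*} [Fintype m] [Fintype n]

lemma dotProduct_mulVec_eq_vec_dotProduct_vec {R : Type*} [CommSemiring R]
    (x : m → R) (A : Matrix m n R) (y : n → R) :
    x ⬝ᵥ A *ᵥ y = vec A ⬝ᵥ vec (vecMulVec x y) := by
  simp only [dotProduct, vec_eq_uncurry, Fintype.sum_prod_type, Function.uncurry_apply_pair,
    mulVec, vecMulVec_apply, mul_sum]
  rw [sum_comm]
  exact sum_congr rfl fun i _ => sum_congr rfl fun j _ => by ring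

variable [DecidableEq m] [DecidableEq n]

lemma sum_signChar_vec_dotProduct_vec (B : Matrix m n (ZMod 2)) :
    ∑ A : Matrix m n (ZMod 2), signChar (vec A ⬝ᵥ vec B)
      = if B = 0 then (2 : ℝ) ^ (Fintype.card m * Fintype.card n) else 0 := by
  let L : Matrix m n (ZMod 2) →+ ZMod 2 :=
    { toFun A := vec A ⬝ᵥ vec B
      map_zero' := by simp [vec_zero]
      map_add' A A' := by simp [vec_add, add_dotProduct] }
  have hL : L = 0 ↔ B = 0 := by
    refine ⟨fun h => ?_, by rintro rfl; ext; simp [L, vec_zero]⟩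
    ext i j
    simpa [L] using DFunLike.congr_fun h (single i j 1)
  have hcard : Fintype.card (Matrix m n (ZMod 2)) = 2 ^ (Fintype.card m * Fintype.card n) := by
    rw [Fintype.card_eq_nat_card]
    simp [Matrix, ← pow_mul, mul_comm]
  have key := sum_signChar_apply L
  simp only [hL, hcard, Nat.cast_pow, Nat.cast_ofNat] at key
  exact key

end CharacterSum

section OuterProducts

variable {ι : Type*}

lemma eq_zero_or_eq_zero_or_eq_of_vecMulVec_comm {u v : ι → ZMod 2}
    (h : vecMulVec u v = vecMulVec v u) : u = 0 ∨ v = 0 ∨ u = v := by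
  by_cases hu : u = 0
  · exact Or.inl hu
  obtain ⟨k, hk⟩ := Function.ne_iff.mp hu
  have huk : u k = 1 := (ZMod.eq_zero_or_eq_one _).resolve_left hk
  have hv : ∀ j, v j = u j * v k := fun j => by
    simpa [vecMulVec_apply, huk, mul_comm] using congrFun (congrFun h k) j
  rcases ZMod.eq_zero_or_eq_one (v k) with hvk | hvk
  · exact Or.inr (Or.inl (funext fun j => by simp [hv j, hvk]))
  · exact Or.inr (Or.inr (funext fun j => by simp [hv j, hvk]))

lemma vecMulVec_self_add_eq_zero_iff {x y : ι → ZMod 2} :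
    vecMulVec x x + vecMulVec y y = 0 ↔ x = y := by
  refine ⟨fun h => funext fun i => ?_, ?_⟩
  · simpa [vecMulVec_apply, ← sq, ZMod.pow_card, CharTwo.add_eq_zero] using
      congrFun (congrFun h i) i
  · rintro rfl
    ext i j
    exact CharTwo.add_self_eq_zero _

lemma vecMulVec_self_add_four_eq_zero_iff {x y z w : ι → ZMod 2} :
    vecMulVec x x + vecMulVec y y + vecMulVec z z + vecMulVec w w = 0 ↔
      (x = y ∧ z = w) ∨ (x = z ∧ y = w) ∨ (x = w ∧ y = z) := by
  constructor
  · intro h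
    have hij : ∀ i j, x i * x j + y i * y j + z i * z j + w i * w j = 0 := fun i j => by
      simpa [vecMulVec_apply] using congrFun (congrFun h i) j
    have hw : ∀ i, w i = x i + y i + z i := fun i => by
      have hii := hij i i
      simp only [← sq, ZMod.pow_card] at hii
      exact (CharTwo.add_eq_zero.mp hii).symm
    have hcomm : vecMulVec (x + y) (x + z) = vecMulVec (x + z) (x + y) := by
      ext i j
      have hij' := hij i j
      rw [hw i, hw j] at hij'
      simp only [vecMulVec_apply, Pi.add_apply]
      linear_combination (norm := ring_nf) hij'
      reduce_mod_char
    rcases eq_zero_or_eq_zero_or_eq_of_vecMulVec_comm hcomm with h | h | h <;>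
      simp only [funext_iff, Pi.add_apply, Pi.zero_apply, add_right_inj] at h
    · exact Or.inl ⟨funext fun i => CharTwo.add_eq_zero.mp (h i),
        funext fun i => by rw [hw, h, zero_add]⟩
    · exact Or.inr (Or.inl ⟨funext fun i => CharTwo.add_eq_zero.mp (h i),
        funext fun i => by rw [hw, add_right_comm, h, zero_add]⟩)
    · exact Or.inr (Or.inr ⟨funext fun i => by rw [hw, h, CharTwo.add_cancel_right],
        funext h⟩)
  · rintro (⟨rfl, rfl⟩ | ⟨rfl, rfl⟩ | ⟨rfl, rfl⟩) <;> ext i j <;>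
      simp only [Matrix.add_apply, vecMulVec_apply, Matrix.zero_apply] <;> ring_nf <;>
      reduce_mod_char

end OuterProducts

section QuadSign

variable {ι : Type*} [Fintype ι] [DecidableEq ι]

noncomputable def quadSign (A : Matrix ι ι (ZMod 2)) (x : ι → ZMod 2) : ℝ :=
  signChar (x ⬝ᵥ A *ᵥ x)

lemma sum_quadSign_mul_quadSign (x y : ι → ZMod 2) :
    ∑ A : Matrix ι ι (ZMod 2), quadSign A x * quadSign A y
      = if x = y then (2 : ℝ) ^ (Fintype.card ι ^ 2) else 0 := by
  simp only [quadSign, ← AddChar.map_add_eq_mul, dotProduct_mulVec_eq_vec_dotProduct_vec,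
    ← dotProduct_add, ← vec_add]
  rw [sum_signChar_vec_dotProduct_vec, sq]
  simp only [vecMulVec_self_add_eq_zero_iff]

lemma sum_quadSign_mul_four (x y z w : ι → ZMod 2) :
    ∑ A : Matrix ι ι (ZMod 2), quadSign A x * quadSign A y * quadSign A z * quadSign A w
      = if (x = y ∧ z = w) ∨ (x = z ∧ y = w) ∨ (x = w ∧ y = z)
        then (2 : ℝ) ^ (Fintype.card ι ^ 2) else 0 := by
  simp only [quadSign, ← AddChar.map_add_eq_mul, dotProduct_mulVec_eq_vec_dotProduct_vec,
    ← dotProduct_add, ← vec_add]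
  rw [sum_signChar_vec_dotProduct_vec, sq]
  simp only [vecMulVec_self_add_four_eq_zero_iff]

end QuadSign

section RealSums

variable {α : Type*} [Fintype α]

lemma sum_sq_sum_sum_mul_mul {β : Type*} [Fintype β] (s : β → α → ℝ) (m : α → α → ℝ) :
    ∑ b, (∑ x, ∑ y, m x y * (s b x * s b y)) ^ 2
      = ∑ x, ∑ y, ∑ z, ∑ w, m x y * m z w * ∑ b, s b x * s b y * s b z * s b w := by
  simp only [sq, sum_mul]
  simp only [mul_sum]
  rw [sum_comm]
  refine sum_congr rfl fun x _ => ?_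
  rw [sum_comm]
  refine sum_congr rfl fun y _ => ?_
  rw [sum_comm]
  refine sum_congr rfl fun z _ => ?_
  rw [sum_comm]
  exact sum_congr rfl fun w _ => sum_congr rfl fun b _ => by ring

variable [DecidableEq α]

omit [Fintype α] in
lemma ite_pairing (x y z w : α) :
    (if (x = y ∧ z = w) ∨ (x = z ∧ y = w) ∨ (x = w ∧ y = z) then (1 : ℝ) else 0)
      = (if x = y ∧ z = w then 1 else 0) + (if x = z ∧ y = w then 1 else 0)
        + (if x = w ∧ y = z then 1 else 0) - 2 * if x = y ∧ x = z ∧ x = w then 1 else 0 := by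
  split_ifs <;> grind

lemma sum_pairing (m : α → α → ℝ) :
    ∑ x, ∑ y, ∑ z, ∑ w,
        m x y * m z w * (if (x = y ∧ z = w) ∨ (x = z ∧ y = w) ∨ (x = w ∧ y = z) then 1 else 0)
      = (∑ x, m x x) ^ 2 + ∑ x, ∑ y, m x y ^ 2 + ∑ x, ∑ y, m x y * m y x
        - 2 * ∑ x, m x x ^ 2 := by
  simp only [ite_pairing, mul_add, mul_sub, sum_add_distrib, sum_sub_distrib, ite_and, mul_ite,
    mul_one, mul_zero, sum_ite_eq, mem_univ, if_true]
  simp [sq, mul_sum, mul_comm]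

lemma sum_pairing_le (m : α → α → ℝ) :
    ∑ x, ∑ y, ∑ z, ∑ w,
        m x y * m z w * (if (x = y ∧ z = w) ∨ (x = z ∧ y = w) ∨ (x = w ∧ y = z) then 1 else 0)
      ≤ (∑ x, m x x) ^ 2 + 2 * ∑ x, ∑ y, m x y ^ 2 := by
  have hcross : ∑ x, ∑ y, m x y * m y x ≤ ∑ x, ∑ y, m x y ^ 2 := by
    calc ∑ x, ∑ y, m x y * m y x ≤ ∑ x, ∑ y, (m x y ^ 2 + m y x ^ 2) / 2 := by
          gcongr with x _ y _
          nlinarith [sq_nonneg (m x y - m y x)]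
      _ = ∑ x, ∑ y, m x y ^ 2 := by
          simp only [← sum_div, sum_add_distrib]
          rw [sum_comm (f := fun x y => m y x ^ 2)]
          ring
  have hdiag : 0 ≤ ∑ x, m x x ^ 2 := sum_nonneg fun x _ => sq_nonneg _
  rw [sum_pairing]
  linarith

end RealSums

section Contraction

variable {ι : Type*} [Fintype ι] [DecidableEq ι] {M : Matrix ι ι ℂ}

lemma sum_norm_sq_col_le_one (hM : ∀ v : EuclideanSpace ℂ ι, ‖toEuclideanLin M v‖ ≤ ‖v‖)
    (j : ι) : ∑ i, ‖M i j‖ ^ 2 ≤ 1 := by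
  have hcol : toEuclideanLin M (EuclideanSpace.single j 1) = WithLp.toLp 2 (M.col j) := by
    simp [toLpLin_apply]
  have h := hM (EuclideanSpace.single j 1)
  rw [hcol, PiLp.norm_single, norm_one] at h
  have h2 := pow_le_pow_left₀ (norm_nonneg _) h 2
  rwa [EuclideanSpace.norm_sq_eq, one_pow] at h2

lemma sum_sq_re_le_card (hM : ∀ v : EuclideanSpace ℂ ι, ‖toEuclideanLin M v‖ ≤ ‖v‖) :
    ∑ i, ∑ j, (M i j).re ^ 2 ≤ Fintype.card ι :=
  calc ∑ i, ∑ j, (M i j).re ^ 2 ≤ ∑ i, ∑ j, ‖M i j‖ ^ 2 :=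
        sum_le_sum fun i _ => sum_le_sum fun j _ => by
          rw [Complex.sq_norm, sq]
          exact Complex.re_sq_le_normSq _
    _ = ∑ j, ∑ i, ‖M i j‖ ^ 2 := sum_comm
    _ ≤ ∑ _j : ι, 1 := sum_le_sum fun j _ => sum_norm_sq_col_le_one hM j
    _ = Fintype.card ι := by simp

end Contraction

lemma re_trace_mul_vecMulVec_ofReal {ι : Type*} [Fintype ι] (M : Matrix ι ι ℂ) (φ : ι → ℝ) :
    (M * vecMulVec (fun x => (φ x : ℂ)) (star fun x => (φ x : ℂ))).trace.re
      = ∑ x, ∑ y, (M x y).re * (φ x * φ y) := by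
  simp only [trace, diag_apply, mul_apply, vecMulVec_apply, Pi.star_apply, Complex.star_def,
    Complex.conj_ofReal, Complex.re_sum]
  refine sum_congr rfl fun x _ => sum_congr rfl fun y _ => ?_
  rw [← Complex.ofReal_mul, mul_comm (φ y), Complex.re_mul_ofReal]

section PhaseState

variable {n : ℕ}

lemma phaseState_eq_ofReal (A : Matrix (Fin n) (Fin n) (ZMod 2)) (x : Fin n → ZMod 2) :
    phaseState n A x = (((Real.sqrt (2 ^ n))⁻¹ * quadSign A x : ℝ) : ℂ) := by
  rw [phaseState, quadSign, signChar_apply]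
  split_ifs <;> simp

lemma re_trace_mul_phaseProj (M : Matrix (Fin n → ZMod 2) (Fin n → ZMod 2) ℂ)
    (A : Matrix (Fin n) (Fin n) (ZMod 2)) :
    (M * phaseProj n A).trace.re
      = (2 ^ n)⁻¹ * ∑ x, ∑ y, (M x y).re * (quadSign A x * quadSign A y) := by
  have hsqrt : (Real.sqrt (2 ^ n))⁻¹ * (Real.sqrt (2 ^ n))⁻¹ = ((2 : ℝ) ^ n)⁻¹ := by
    rw [← mul_inv, Real.mul_self_sqrt (by positivity)]
  rw [phaseProj, funext (phaseState_eq_ofReal A), re_trace_mul_vecMulVec_ofReal, mul_sum]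
  refine sum_congr rfl fun x _ => ?_
  rw [mul_sum]
  refine sum_congr rfl fun y _ => ?_
  rw [← hsqrt]
  ring

lemma sum_re_trace_mul_phaseProj (M : Matrix (Fin n → ZMod 2) (Fin n → ZMod 2) ℂ) :
    ∑ A : Matrix (Fin n) (Fin n) (ZMod 2), (M * phaseProj n A).trace.re
      = 2 ^ (n ^ 2) * (M.trace.re / 2 ^ n) := by
  have hswap : ∑ A : Matrix (Fin n) (Fin n) (ZMod 2), ∑ x, ∑ y,
        (M x y).re * (quadSign A x * quadSign A y)
      = ∑ x, ∑ y, (M x y).re * ∑ A : Matrix (Fin n) (Fin n) (ZMod 2),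
        quadSign A x * quadSign A y := by
    rw [sum_comm]
    exact sum_congr rfl fun x _ => by rw [sum_comm]; simp only [mul_sum]
  simp only [re_trace_mul_phaseProj]
  rw [← mul_sum, hswap]
  simp only [sum_quadSign_mul_quadSign, mul_ite, mul_zero, sum_ite_eq, mem_univ, if_true,
    Fintype.card_fin]
  rw [trace, Complex.re_sum, ← sum_mul]
  simp only [diag_apply]
  ring

lemma sum_sq_re_trace_mul_phaseProj (M : Matrix (Fin n → ZMod 2) (Fin n → ZMod 2) ℂ) :
    ∑ A : Matrix (Fin n) (Fin n) (ZMod 2), (M * phaseProj n A).trace.re ^ 2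
      = 2 ^ (n ^ 2) * ((∑ x, ∑ y, ∑ z, ∑ w, (M x y).re * (M z w).re *
          (if (x = y ∧ z = w) ∨ (x = z ∧ y = w) ∨ (x = w ∧ y = z) then 1 else 0)) / 4 ^ n) := by
  have h4 : (4 : ℝ) ^ n = 2 ^ n * 2 ^ n := by rw [← mul_pow]; norm_num
  have hind : ∀ (P : Prop) [Decidable P] (a : ℝ),
      a * (if P then (2 : ℝ) ^ (n ^ 2) else 0) = 2 ^ (n ^ 2) * (a * if P then 1 else 0) := by
    intro P _ a
    split_ifs <;> ring
  simp only [re_trace_mul_phaseProj, mul_pow, ← mul_sum]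
  rw [sum_sq_sum_sum_mul_mul]
  simp only [sum_quadSign_mul_four, Fintype.card_fin, hind, ← mul_sum]
  rw [h4]
  ring

end PhaseState

theorem phaseProj_variance_bound_general (n : ℕ)
    (M : Matrix (Fin n → ZMod 2) (Fin n → ZMod 2) ℂ)
    (hMnorm : ∀ v : EuclideanSpace ℂ (Fin n → ZMod 2),
      ‖Matrix.toEuclideanLin M v‖ ≤ ‖v‖) :
    ((2 ^ (n ^ 2) : ℝ)⁻¹ * ∑ A : Matrix (Fin n) (Fin n) (ZMod 2),
        ((M * phaseProj n A).trace).re = M.trace.re / 2 ^ n) ∧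
    ((2 ^ (n ^ 2) : ℝ)⁻¹ * ∑ A : Matrix (Fin n) (Fin n) (ZMod 2),
        ((M * phaseProj n A).trace).re ^ 2
      ≤ M.trace.re ^ 2 / 4 ^ n + 2 / 2 ^ n) ∧
    ((2 ^ (n ^ 2) : ℝ)⁻¹ * ∑ A : Matrix (Fin n) (Fin n) (ZMod 2),
        ((M * phaseProj n A).trace).re ^ 2
      - (M.trace.re / 2 ^ n) ^ 2 ≤ 2 / 2 ^ n) := by
  have hpos : (0 : ℝ) < 2 ^ (n ^ 2) := by positivity
  have h4 : (4 : ℝ) ^ n = 2 ^ n * 2 ^ n := by rw [← mul_pow]; norm_num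
  have htrace : M.trace.re = ∑ x, (M x x).re := by rw [trace, Complex.re_sum]; rfl
  have hfrob : ∑ x, ∑ y, (M x y).re ^ 2 ≤ 2 ^ n := by
    simpa using sum_sq_re_le_card hMnorm
  have hsecond : (2 ^ (n ^ 2) : ℝ)⁻¹ * ∑ A : Matrix (Fin n) (Fin n) (ZMod 2),
      ((M * phaseProj n A).trace).re ^ 2 ≤ M.trace.re ^ 2 / 4 ^ n + 2 / 2 ^ n := by
    rw [sum_sq_re_trace_mul_phaseProj, inv_mul_cancel_left₀ hpos.ne']
    calc _ ≤ (M.trace.re ^ 2 + 2 * 2 ^ n) / 4 ^ n := by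
          rw [htrace]
          gcongr
          exact (sum_pairing_le _).trans (by gcongr)
      _ = M.trace.re ^ 2 / 4 ^ n + 2 / 2 ^ n := by
          rw [add_div, h4]
          field_simp
  refine ⟨?_, hsecond, ?_⟩
  · rw [sum_re_trace_mul_phaseProj, inv_mul_cancel_left₀ hpos.ne']
  · have hsq : (M.trace.re / 2 ^ n) ^ 2 = M.trace.re ^ 2 / 4 ^ n := by
      rw [div_pow, h4]
      ring
    linarith

/-- Diagonal-block case of the variance computation: for Hermitian `M` with `‖M‖ ≤ 1`,
`E_A[tr(M φ_A φ_A†)] = tr(M)/2ⁿ`, `E_A[(tr(M φ_A φ_A†))²] ≤ (tr M)²/4ⁿ + 2·2^{-n}`, and hence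
the variance of `tr(M φ_A φ_A†)` is at most `2·2^{-n}`. -/
theorem phaseProj_variance_bound (n : ℕ) (hn : 1 ≤ n)
    (M : Matrix (Fin n → ZMod 2) (Fin n → ZMod 2) ℂ) (hM : M.IsHermitian)
    (hMnorm : ∀ v : EuclideanSpace ℂ (Fin n → ZMod 2),
      ‖Matrix.toEuclideanLin M v‖ ≤ ‖v‖) :
    ((2 ^ (n ^ 2) : ℝ)⁻¹ * ∑ A : Matrix (Fin n) (Fin n) (ZMod 2),
        ((M * phaseProj n A).trace).re = M.trace.re / 2 ^ n) ∧
    ((2 ^ (n ^ 2) : ℝ)⁻¹ * ∑ A : Matrix (Fin n) (Fin n) (ZMod 2),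
        ((M * phaseProj n A).trace).re ^ 2
      ≤ M.trace.re ^ 2 / 4 ^ n + 2 / 2 ^ n) ∧
    ((2 ^ (n ^ 2) : ℝ)⁻¹ * ∑ A : Matrix (Fin n) (Fin n) (ZMod 2),
        ((M * phaseProj n A).trace).re ^ 2
      - (M.trace.re / 2 ^ n) ^ 2 ≤ 2 / 2 ^ n) :=
  phaseProj_variance_bound_general n M hMnorm
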